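/- Let X be a complex topological vector space and Γ ⊆ Γ' sets of continuous linear operators on X such that every S ∈ Γ' lies in the strong operator topology closure of Γ, i.e., for every finite set F ⊆ X and every neighborhood U of 0 in X there exists T ∈ Γ with S x − T x ∈ U for all x ∈ F. Then Γ and Γ' have exactly the same diskcyclic vectors: 𝔻C(Γ') = 𝔻C(Γ). In particular, Γ is diskcyclic if and only if Γ' is diskcyclic. -/

import Mathlib

/-!
Every `α • S x` with `S ∈ Γ'` is a limit of the points `α • T x`, `T ∈ Γ`, because `S` is a
strong-operator limit of elements of `Γ` and multiplication by `α` is continuous. Hence the disk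
orbit of `x` under `Γ'` lies between that under `Γ` and its closure, and the two are dense
together.
-/

section DiskOrbit

variable {𝕜 X : Type*} [NormedField 𝕜] [AddCommGroup X] [Module 𝕜 X] [TopologicalSpace X]

def diskOrbit (Γ : Set (X →L[𝕜] X)) (x : X) : Set X :=
  {y | ∃ α : 𝕜, ‖α‖ ≤ 1 ∧ ∃ T ∈ Γ, y = α • T x}

theorem diskOrbit_mono {Γ Γ' : Set (X →L[𝕜] X)} (h : Γ ⊆ Γ') (x : X) :
    diskOrbit Γ x ⊆ diskOrbit Γ' x := by
  rintro _ ⟨α, hα, T, hT, rfl⟩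
  exact ⟨α, hα, T, h hT, rfl⟩

theorem diskOrbit_subset_closure [ContinuousConstSMul 𝕜 X] {Γ Γ' : Set (X →L[𝕜] X)} {x : X}
    (h : ∀ S ∈ Γ', S x ∈ closure ((fun T : X →L[𝕜] X => T x) '' Γ)) :
    diskOrbit Γ' x ⊆ closure (diskOrbit Γ x) := by
  rintro _ ⟨α, hα, S, hS, rfl⟩
  refine map_mem_closure (continuous_const_smul α) (h S hS) ?_
  rintro _ ⟨T, hT, rfl⟩
  exact ⟨α, hα, T, hT, rfl⟩

theorem dense_diskOrbit_iff_of_subset_closure [ContinuousConstSMul 𝕜 X]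
    {Γ Γ' : Set (X →L[𝕜] X)} (hsub : Γ ⊆ Γ') {x : X}
    (h : ∀ S ∈ Γ', S x ∈ closure ((fun T : X →L[𝕜] X => T x) '' Γ)) :
    Dense (diskOrbit Γ' x) ↔ Dense (diskOrbit Γ x) :=
  ⟨fun hd => dense_closure.mp (hd.mono (diskOrbit_subset_closure h)),
    fun hd => hd.mono (diskOrbit_mono hsub x)⟩

end DiskOrbit

theorem apply_mem_closure_of_forall_finset {𝕜 X : Type*} [Semiring 𝕜] [AddCommGroup X]
    [Module 𝕜 X] [TopologicalSpace X] [IsTopologicalAddGroup X] {Γ : Set (X →L[𝕜] X)}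
    {S : X →L[𝕜] X} (hS : ∀ F : Finset X, ∀ U ∈ nhds (0 : X), ∃ T ∈ Γ, ∀ x ∈ F, S x - T x ∈ U)
    (x : X) : S x ∈ closure ((fun T : X →L[𝕜] X => T x) '' Γ) := by
  rw [mem_closure_iff_nhds]
  intro V hV
  have hU : (fun d => S x - d) ⁻¹' V ∈ nhds (0 : X) :=
    (continuous_const.sub continuous_id).continuousAt.preimage_mem_nhds (by simpa using hV)
  obtain ⟨T, hT, hTx⟩ := hS {x} _ hU
  exact ⟨T x, by simpa using hTx x (Finset.mem_singleton_self x), T, hT, rfl⟩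

/-- If every `S ∈ Γ'` lies in the strong operator topology closure of `Γ ⊆ Γ'`,
then `Γ` and `Γ'` have exactly the same diskcyclic vectors; in particular `Γ` is
diskcyclic iff `Γ'` is diskcyclic. -/
theorem stmt_10 {X : Type*} [AddCommGroup X] [Module ℂ X] [TopologicalSpace X]
    [IsTopologicalAddGroup X] [ContinuousSMul ℂ X]
    (Γ Γ' : Set (X →L[ℂ] X)) (hsub : Γ ⊆ Γ')
    (hSOT : ∀ S ∈ Γ', ∀ F : Finset X, ∀ U ∈ nhds (0 : X),
      ∃ T ∈ Γ, ∀ x ∈ F, S x - T x ∈ U) :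
    {x : X | Dense {y : X | ∃ α : ℂ, ‖α‖ ≤ 1 ∧ ∃ T ∈ Γ', y = α • T x}} =
      {x : X | Dense {y : X | ∃ α : ℂ, ‖α‖ ≤ 1 ∧ ∃ T ∈ Γ, y = α • T x}} ∧
    ((∃ x : X, Dense {y : X | ∃ α : ℂ, ‖α‖ ≤ 1 ∧ ∃ T ∈ Γ, y = α • T x}) ↔
      ∃ x : X, Dense {y : X | ∃ α : ℂ, ‖α‖ ≤ 1 ∧ ∃ T ∈ Γ', y = α • T x}) := by
  have hdense (x : X) : Dense (diskOrbit Γ' x) ↔ Dense (diskOrbit Γ x) :=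
    dense_diskOrbit_iff_of_subset_closure hsub fun S hS =>
      apply_mem_closure_of_forall_finset (hSOT S hS) x
  exact ⟨Set.ext hdense, exists_congr fun x => (hdense x).symm⟩
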